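/- (ER for single-element sampling.) Assume each f_i is L_i-smooth and bounded below with f_i* = inf_x f_i(x), and that f attains its minimum at some point x*. Let p_1, …, p_n > 0 with ∑_i p_i = 1, and let 𝒟 be the single-element sampling distribution: v = e_i/p_i with probability p_i (e_i the i-th standard basis vector of ℝ^n). Set σ* = (1/n)∑_{i=1}^n (f_i(x*) − f_i*) and A = (1/n)·max_i (L_i/p_i). Then for all x ∈ ℝ^d, E_v‖g(x,v)‖² ≤ 2A·(f(x) − f^inf) + 2A·σ*; i.e., ER holds with constants A = (1/n)max_i L_i/p_i, B = 0, C = 2Aσ*. -/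

import Mathlib

/-!
Under single-element sampling, `E‖g(x,v)‖² = ∑ᵢ pᵢ ‖∇fᵢ(x) / (n pᵢ)‖² = n⁻² ∑ᵢ ‖∇fᵢ(x)‖² / pᵢ`.
An `Lᵢ`-smooth function bounded below satisfies `‖∇fᵢ(x)‖² ≤ 2 Lᵢ (fᵢ(x) - inf fᵢ)`: apply the
descent lemma along the steepest-descent ray `x - t ∇fᵢ(x)` and optimise at `t = 1 / Lᵢ`.
Bounding `Lᵢ / pᵢ` by its maximum and writing
`fᵢ(x) - inf fᵢ = (fᵢ(x) - fᵢ(x*)) + (fᵢ(x*) - inf fᵢ)`, the average of these gaps is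
`f(x) - f(x*) + σ*`, and `f(x*) = inf f`.
-/

open MeasureTheory

noncomputable section

/-- The finite-sum objective `f(x) = (1/n) ∑ i, f i x`. -/
def favg {n d : ℕ} (f : Fin n → EuclideanSpace ℝ (Fin d) → ℝ)
    (x : EuclideanSpace ℝ (Fin d)) : ℝ :=
  (n : ℝ)⁻¹ * ∑ i, f i x

/-- The stochastic gradient `g(x, v) = (1/n) ∑ i, v i • ∇ f i x`. -/
def sgrad {n d : ℕ} (f : Fin n → EuclideanSpace ℝ (Fin d) → ℝ)
    (x : EuclideanSpace ℝ (Fin d)) (v : Fin n → ℝ) : EuclideanSpace ℝ (Fin d) :=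
  (n : ℝ)⁻¹ • ∑ i, v i • gradient (f i) x

section

open InnerProductSpace

variable {E : Type*} [NormedAddCommGroup E] [InnerProductSpace ℝ E] [CompleteSpace E]
  {f : E → ℝ} {K : NNReal}

theorem hasDerivAt_comp_add_smul (hf : Differentiable ℝ f) (x u : E) (t : ℝ) :
    HasDerivAt (fun s : ℝ => f (x + s • u)) ⟪gradient f (x + t • u), u⟫_ℝ t := by
  have hline : HasDerivAt (fun s : ℝ => x + s • u) u t := by
    simpa using ((hasDerivAt_id t).smul_const u).const_add x
  have h := (hf (x + t • u)).hasFDerivAt.comp_hasDerivAt t hline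
  rwa [← toDual_gradient, toDual_apply_apply] at h

theorem le_add_inner_gradient_add_of_lipschitzWith (hf : Differentiable ℝ f)
    (hK : LipschitzWith K (gradient f)) (x u : E) :
    f (x + u) ≤ f x + ⟪gradient f x, u⟫_ℝ + K / 2 * ‖u‖ ^ 2 := by
  set φ : ℝ → ℝ := fun t =>
    f (x + t • u) - t * ⟪gradient f x, u⟫_ℝ - K / 2 * t ^ 2 * ‖u‖ ^ 2
  have hφ : ∀ t, HasDerivAt φ
      (⟪gradient f (x + t • u) - gradient f x, u⟫_ℝ - K * t * ‖u‖ ^ 2) t := fun t =>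
    (((hasDerivAt_comp_add_smul hf x u t).sub
      ((hasDerivAt_id t).mul_const ⟪gradient f x, u⟫_ℝ)).sub
      (((hasDerivAt_pow 2 t).const_mul ((K : ℝ) / 2)).mul_const (‖u‖ ^ 2))).congr_deriv
      (by rw [inner_sub_left]; push_cast; ring)
  have hφ'_nonpos : ∀ t ∈ interior (Set.Icc (0 : ℝ) 1),
      ⟪gradient f (x + t • u) - gradient f x, u⟫_ℝ - K * t * ‖u‖ ^ 2 ≤ 0 := by
    intro t ht
    rw [interior_Icc] at ht
    have hlip : ‖gradient f (x + t • u) - gradient f x‖ ≤ K * (t * ‖u‖) := by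
      simpa [dist_eq_norm, norm_smul, abs_of_pos ht.1] using hK.dist_le_mul (x + t • u) x
    have := real_inner_le_norm (gradient f (x + t • u) - gradient f x) u
    nlinarith [norm_nonneg u]
  have hanti : AntitoneOn φ (Set.Icc 0 1) :=
    antitoneOn_of_hasDerivWithinAt_nonpos (convex_Icc 0 1)
      (fun t _ => (hφ t).continuousAt.continuousWithinAt)
      (fun t _ => (hφ t).hasDerivWithinAt) hφ'_nonpos
  have := hanti (Set.left_mem_Icc.mpr zero_le_one) (Set.right_mem_Icc.mpr zero_le_one) zero_le_one
  simp only [φ, zero_smul, add_zero, one_smul] at this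
  linarith

theorem le_two_mul_mul_of_forall_mul_sub_le {a K D : ℝ} (hK : 0 ≤ K)
    (h : ∀ t : ℝ, t * a - K / 2 * t ^ 2 * a ≤ D) : a ≤ 2 * K * D := by
  rcases hK.eq_or_lt with hK0 | hK
  · subst hK0
    obtain rfl : a = 0 := by
      by_contra! ha0
      have := h ((D + 1) / a)
      rw [div_mul_cancel₀ _ ha0] at this
      linarith
    simp
  · have := h K⁻¹
    field_simp at this
    nlinarith

theorem sq_norm_gradient_le_of_lipschitzWith (hf : Differentiable ℝ f)
    (hK : LipschitzWith K (gradient f)) (hbdd : BddBelow (Set.range f)) (x : E) :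
    ‖gradient f x‖ ^ 2 ≤ 2 * K * (f x - ⨅ y, f y) := by
  refine le_two_mul_mul_of_forall_mul_sub_le K.2 fun t => ?_
  have hdesc := le_add_inner_gradient_add_of_lipschitzWith hf hK x (-(t • gradient f x))
  rw [inner_neg_right, real_inner_smul_right, real_inner_self_eq_norm_sq, norm_neg, norm_smul,
    mul_pow, Real.norm_eq_abs, sq_abs] at hdesc
  linarith [ciInf_le hbdd (x + -(t • gradient f x))]

end

theorem integral_finsetSum_ofReal_smul_dirac {α G ι : Type*} [MeasurableSpace α]
    [MeasurableSingletonClass α] [NormedAddCommGroup G] [NormedSpace ℝ G] [CompleteSpace G]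
    (s : Finset ι) {p : ι → ℝ} (hp : ∀ i ∈ s, 0 ≤ p i) (a : ι → α) (g : α → G) :
    ∫ v, g v ∂(∑ i ∈ s, ENNReal.ofReal (p i) • Measure.dirac (a i)) =
      ∑ i ∈ s, p i • g (a i) := by
  rw [integral_finsetSum_measure fun i _ =>
    (integrable_dirac enorm_lt_top).smul_measure ENNReal.ofReal_ne_top]
  refine Finset.sum_congr rfl fun i hi => ?_
  rw [integral_smul_measure, integral_dirac, ENNReal.toReal_ofReal (hp i hi)]

section

variable {n d : ℕ} (f : Fin n → EuclideanSpace ℝ (Fin d) → ℝ)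

theorem sgrad_single (x : EuclideanSpace ℝ (Fin d)) (i : Fin n) (c : ℝ) :
    sgrad f x (Pi.single i c) = ((n : ℝ)⁻¹ * c) • gradient (f i) x := by
  rw [sgrad, Finset.sum_eq_single_of_mem i (Finset.mem_univ i)
    fun j _ hj => by rw [Pi.single_eq_of_ne hj, zero_smul], Pi.single_eq_same, smul_smul]

theorem favg_sub_iInf_add {xstar : EuclideanSpace ℝ (Fin d)}
    (hmin : ∀ y, favg f xstar ≤ favg f y) (x : EuclideanSpace ℝ (Fin d)) :
    favg f x - (⨅ y, favg f y) + (n : ℝ)⁻¹ * ∑ i, (f i xstar - ⨅ y, f i y) =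
      (n : ℝ)⁻¹ * ∑ i, (f i x - ⨅ y, f i y) := by
  have hinf : (⨅ y, favg f y) = favg f xstar :=
    le_antisymm (ciInf_le ⟨favg f xstar, Set.forall_mem_range.mpr hmin⟩ xstar) (le_ciInf hmin)
  rw [hinf]
  simp only [favg, Finset.sum_sub_distrib]
  ring

theorem mul_sq_norm_sgrad_single_le {i : Fin n} {L p : ℝ} (hL : 0 ≤ L) (hp : 0 < p)
    (hdiff : Differentiable ℝ (f i)) (hsmooth : LipschitzWith L.toNNReal (gradient (f i)))
    (hbelow : BddBelow (Set.range (f i))) (x : EuclideanSpace ℝ (Fin d)) :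
    p * ‖sgrad f x (Pi.single i p⁻¹)‖ ^ 2 ≤
      2 * ((n : ℝ)⁻¹ * (L / p)) * ((n : ℝ)⁻¹ * (f i x - ⨅ y, f i y)) := by
  have hgrad := sq_norm_gradient_le_of_lipschitzWith hdiff hsmooth hbelow x
  rw [Real.coe_toNNReal _ hL] at hgrad
  rw [sgrad_single, norm_smul, mul_pow, Real.norm_eq_abs, sq_abs]
  calc p * (((n : ℝ)⁻¹ * p⁻¹) ^ 2 * ‖gradient (f i) x‖ ^ 2)
      = (n : ℝ)⁻¹ ^ 2 * p⁻¹ * ‖gradient (f i) x‖ ^ 2 := by field_simp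
    _ ≤ (n : ℝ)⁻¹ ^ 2 * p⁻¹ * (2 * L * (f i x - ⨅ y, f i y)) := by gcongr
    _ = 2 * ((n : ℝ)⁻¹ * (L / p)) * ((n : ℝ)⁻¹ * (f i x - ⨅ y, f i y)) := by ring

end

theorem ER_of_single_element_sampling_general
    {d n : ℕ} (hn : 0 < n)
    (f : Fin n → EuclideanSpace ℝ (Fin d) → ℝ)
    (L : Fin n → ℝ) (hLnonneg : ∀ i, 0 ≤ L i)
    (hdiff : ∀ i, Differentiable ℝ (f i))
    (hsmooth : ∀ i, LipschitzWith (L i).toNNReal (gradient (f i)))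
    (hbelow : ∀ i, BddBelow (Set.range (f i)))
    (xstar : EuclideanSpace ℝ (Fin d)) (hmin : ∀ y, favg f xstar ≤ favg f y)
    -- the sampling probabilities
    (p : Fin n → ℝ) (hp : ∀ i, 0 < p i)
    -- the single-element sampling distribution
    (𝒟 : Measure (Fin n → ℝ))
    (h𝒟 : 𝒟 = ∑ i, ENNReal.ofReal (p i) • Measure.dirac (Pi.single i (p i)⁻¹))
    -- `σ* = (1/n) ∑ i, (f i x* − inf f i)` and `A = (1/n) max_i (L i / p i)`
    (σstar A : ℝ)
    (hσstar : σstar = (n : ℝ)⁻¹ * ∑ i, (f i xstar - ⨅ y, f i y))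
    (hAdef : A = (n : ℝ)⁻¹ * Finset.univ.sup'
      (Finset.univ_nonempty_iff.mpr (Fin.pos_iff_nonempty.mp hn))
      (fun i => L i / p i)) :
    ∀ x, ∫ v, ‖sgrad f x v‖ ^ 2 ∂𝒟 ≤
      2 * A * (favg f x - ⨅ y, favg f y) + 2 * A * σstar := by
  intro x
  have hA : ∀ i, (n : ℝ)⁻¹ * (L i / p i) ≤ A := fun i => by
    rw [hAdef]
    gcongr
    exact Finset.le_sup' (fun i => L i / p i) (Finset.mem_univ i)
  rw [h𝒟, integral_finsetSum_ofReal_smul_dirac _ (fun i _ => (hp i).le), hσstar, ← mul_add,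
    favg_sub_iInf_add f hmin x, Finset.mul_sum, Finset.mul_sum]
  refine Finset.sum_le_sum fun i _ => ?_
  calc p i • ‖sgrad f x (Pi.single i (p i)⁻¹)‖ ^ 2
      ≤ 2 * ((n : ℝ)⁻¹ * (L i / p i)) * ((n : ℝ)⁻¹ * (f i x - ⨅ y, f i y)) :=
        mul_sq_norm_sgrad_single_le f (hLnonneg i) (hp i) (hdiff i) (hsmooth i) (hbelow i) x
    _ ≤ 2 * A * ((n : ℝ)⁻¹ * (f i x - ⨅ y, f i y)) := by
        have hgap : 0 ≤ f i x - ⨅ y, f i y := sub_nonneg.mpr (ciInf_le (hbelow i) x)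
        gcongr
        exact hA i

/-- **Proposition (ER for single-element sampling), with
`A = (1/n) max_i (L i / p i)`, `B = 0`, `C = 2·A·σ*`.**
The sampling distribution puts mass `p i` on the vector `e i / p i = Pi.single i (p i)⁻¹`. -/
theorem ER_of_single_element_sampling
    {d n : ℕ} (hn : 0 < n)
    (f : Fin n → EuclideanSpace ℝ (Fin d) → ℝ)
    (L : Fin n → ℝ) (hLnonneg : ∀ i, 0 ≤ L i)
    (hdiff : ∀ i, Differentiable ℝ (f i))
    (hsmooth : ∀ i, LipschitzWith (L i).toNNReal (gradient (f i)))
    (hbelow : ∀ i, BddBelow (Set.range (f i)))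
    (xstar : EuclideanSpace ℝ (Fin d)) (hmin : ∀ y, favg f xstar ≤ favg f y)
    -- the sampling probabilities
    (p : Fin n → ℝ) (hp : ∀ i, 0 < p i) (hpsum : ∑ i, p i = 1)
    -- the single-element sampling distribution
    (𝒟 : Measure (Fin n → ℝ))
    (h𝒟 : 𝒟 = ∑ i, ENNReal.ofReal (p i) • Measure.dirac (Pi.single i (p i)⁻¹))
    -- `σ* = (1/n) ∑ i, (f i x* − inf f i)` and `A = (1/n) max_i (L i / p i)`
    (σstar A : ℝ)
    (hσstar : σstar = (n : ℝ)⁻¹ * ∑ i, (f i xstar - ⨅ y, f i y))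
    (hAdef : A = (n : ℝ)⁻¹ * Finset.univ.sup'
      (Finset.univ_nonempty_iff.mpr (Fin.pos_iff_nonempty.mp hn))
      (fun i => L i / p i)) :
    ∀ x, ∫ v, ‖sgrad f x v‖ ^ 2 ∂𝒟 ≤
      2 * A * (favg f x - ⨅ y, favg f y) + 2 * A * σstar :=
  ER_of_single_element_sampling_general hn f L hLnonneg hdiff hsmooth hbelow xstar hmin p hp 𝒟 h𝒟
    σstar A hσstar hAdef

end
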